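/- For linear operators A₁,...,A_{2n} on a finite-dimensional complex vector space V, the Nambu generalized commutator satisfies [A₁,...,A_{2n}] = (1/2ⁿ) Σ_{σ∈S_{2n}} sign(σ) [A_{σ(1)},A_{σ(2)}][A_{σ(3)},A_{σ(4)}]⋯[A_{σ(2n−1)},A_{σ(2n)}], where the sum runs over all permutations σ of {1,...,2n}. -/

import Mathlib

/-- The Nambu generalized commutator. -/
noncomputable def nambu {R : Type*} [Ring R] {n : ℕ} (A : Fin n → R) : R :=
  ∑ σ : Equiv.Perm (Fin n), (Equiv.Perm.sign σ : ℤ) • (List.ofFn fun i => A (σ i)).prod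

/-- The commutator `[A,B] = AB - BA`. -/
def commOp {R : Type*} [Ring R] (A B : R) : R := A * B - B * A

/-!
Each commutator is the two-variable Nambu bracket, `[X, Y] = ∑_{π ∈ S₂} sign π • X_{π 0} X_{π 1}`.
Expanding the product of the `n` commutators therefore writes the `σ`-term as a sum over
`π ∈ S₂ⁿ` of `sign (σ τ_π) • A_{σ τ_π (1)} ⋯ A_{σ τ_π (2n)}`, where `τ_π` permutes inside each
pair `{2j, 2j+1}`. As `σ ↦ σ τ_π` is a bijection of `S_{2n}`, every one of the `2ⁿ` choices of `π`
contributes exactly the Nambu commutator.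
-/

open Equiv Finset

theorem List.prod_ofFn_smul {S M : Type*} [CommMonoid S] [Monoid M] [MulAction S M]
    [IsScalarTower S M M] [SMulCommClass S M M] {n : ℕ} (c : Fin n → S) (x : Fin n → M) :
    (List.ofFn fun j => c j • x j).prod = (∏ j, c j) • (List.ofFn x).prod := by
  induction n with
  | zero => simp
  | succ n ih =>
    simp only [List.ofFn_succ, List.prod_cons, ih, Fin.prod_univ_succ, smul_mul_smul_comm, mul_smul]

theorem List.prod_ofFn_univ_sum {R : Type*} [Semiring R] {n : ℕ} {κ : Fin n → Type*}
    [∀ j, Fintype (κ j)] (f : ∀ j, κ j → R) :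
    (List.ofFn fun j => ∑ k, f j k).prod =
      ∑ p : ∀ j, κ j, (List.ofFn fun j => f j (p j)).prod := by
  induction n with
  | zero => simp
  | succ n ih =>
    simp only [List.ofFn_succ, List.prod_cons, ih fun j => f j.succ, Finset.sum_mul_sum]
    rw [← (Fin.consEquiv κ).sum_comp, Fintype.sum_prod_type]
    simp [Fin.consEquiv]

theorem Equiv.Perm.univ_fin_two : (univ : Finset (Perm (Fin 2))) = {1, swap 0 1} := by decide

theorem nambu_fin_two {R : Type*} [Ring R] (f : Fin 2 → R) : nambu f = commOp (f 0) (f 1) := by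
  rw [nambu, Perm.univ_fin_two, sum_pair (by decide)]
  simp [commOp, sub_eq_add_neg]

def finPairEquiv (n : ℕ) : Fin n × Fin 2 ≃ Fin (2 * n) :=
  finProdFinEquiv.trans (finCongr (Nat.mul_comm n 2))

@[simp]
theorem finPairEquiv_apply_val {n : ℕ} (p : Fin n × Fin 2) :
    (finPairEquiv n p : ℕ) = 2 * p.1 + p.2 := by
  simp [finPairEquiv, add_comm]

theorem List.prod_ofFn_finPairEquiv {M : Type*} [Monoid M] {n : ℕ} (f : Fin (2 * n) → M) :
    (List.ofFn f).prod =
      (List.ofFn fun j => (List.ofFn fun b => f (finPairEquiv n (j, b))).prod).prod := by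
  rw [List.ofFn_mul', List.prod_flatten, List.map_ofFn]
  congr! with j
  refine congrArg List.prod (congrArg List.ofFn (funext fun b => congrArg f (Fin.ext ?_)))
  simp

def blockPerm {n : ℕ} (π : Fin n → Perm (Fin 2)) : Perm (Fin (2 * n)) :=
  (finPairEquiv n).permCongr (prodCongrRight π)

@[simp]
theorem blockPerm_finPairEquiv {n : ℕ} (π : Fin n → Perm (Fin 2)) (j : Fin n) (b : Fin 2) :
    blockPerm π (finPairEquiv n (j, b)) = finPairEquiv n (j, π j b) := by
  simp [blockPerm, permCongr_apply]

theorem sign_blockPerm {n : ℕ} (π : Fin n → Perm (Fin 2)) :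
    Perm.sign (blockPerm π) = ∏ j, Perm.sign (π j) := by
  rw [blockPerm, Perm.sign_permCongr, Perm.sign_prodCongrRight]

theorem List.prod_ofFn_blockPerm {M : Type*} [Monoid M] {n : ℕ}
    (π : Fin n → Equiv.Perm (Fin 2)) (f : Fin (2 * n) → M) :
    (List.ofFn fun i => f (blockPerm π i)).prod =
      (List.ofFn fun j => (List.ofFn fun b => f (finPairEquiv n (j, π j b))).prod).prod := by
  simp [List.prod_ofFn_finPairEquiv]

theorem sign_smul_prod_nambu_pairs_eq_sum_blockPerm {R : Type*} [Ring R] {n : ℕ}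
    (A : Fin (2 * n) → R) (σ : Perm (Fin (2 * n))) :
    (Perm.sign σ : ℤ) • (List.ofFn fun j => nambu fun b => A (σ (finPairEquiv n (j, b)))).prod =
      ∑ π : Fin n → Perm (Fin 2), (Perm.sign (σ * blockPerm π) : ℤ) •
        (List.ofFn fun i => A ((σ * blockPerm π) i)).prod := by
  simp only [nambu, List.prod_ofFn_univ_sum, List.prod_ofFn_smul, smul_sum, smul_smul]
  refine sum_congr rfl fun π _ => ?_
  rw [map_mul, Units.val_mul, sign_blockPerm, ← List.prod_ofFn_blockPerm π fun i => A (σ i)]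
  push_cast
  rfl

theorem sum_sign_smul_prod_commOp_pairs_eq_two_pow_smul_nambu {R : Type*} [Ring R] (n : ℕ)
    (A : Fin (2 * n) → R) :
    ∑ σ : Perm (Fin (2 * n)), (Perm.sign σ : ℤ) •
        (List.ofFn fun j : Fin n => commOp (A (σ ⟨2 * j.1, by omega⟩))
          (A (σ ⟨2 * j.1 + 1, by omega⟩))).prod = 2 ^ n • nambu A := by
  have commOp_eq_nambu : ∀ (σ : Perm (Fin (2 * n))) (j : Fin n),
      commOp (A (σ ⟨2 * j.1, by omega⟩)) (A (σ ⟨2 * j.1 + 1, by omega⟩)) =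
        nambu fun b => A (σ (finPairEquiv n (j, b))) := by
    intro σ j
    rw [nambu_fin_two]
    congr 3 <;> ext <;> simp
  calc _ = ∑ σ : Perm (Fin (2 * n)), ∑ π : Fin n → Perm (Fin 2),
        (Perm.sign (σ * blockPerm π) : ℤ) • (List.ofFn fun i => A ((σ * blockPerm π) i)).prod := by
        simp only [commOp_eq_nambu, sign_smul_prod_nambu_pairs_eq_sum_blockPerm]
    _ = ∑ _π : Fin n → Perm (Fin 2), nambu A := by
        rw [sum_comm]
        exact sum_congr rfl fun π _ => Equiv.sum_comp (Equiv.mulRight (blockPerm π))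
          fun τ => (Perm.sign τ : ℤ) • (List.ofFn fun i => A (τ i)).prod
    _ = 2 ^ n • nambu A := by simp [Fintype.card_perm]

/-- Lemma `lemcomm2`: the Nambu generalized commutator of operators
`A₁, ..., A_{2n}` on a finite-dimensional complex vector space equals
`(1/2ⁿ) ∑_{σ ∈ S_{2n}} sign(σ) [A_{σ(1)},A_{σ(2)}]⋯[A_{σ(2n-1)},A_{σ(2n)}]`. -/
theorem stmt1 {V : Type*} [AddCommGroup V] [Module ℂ V]
    (n : ℕ) (A : Fin (2 * n) → Module.End ℂ V) :
    nambu A =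
      ((1 : ℂ) / 2 ^ n) •
        ∑ σ : Equiv.Perm (Fin (2 * n)),
          (Equiv.Perm.sign σ : ℤ) •
            (List.ofFn fun j : Fin n =>
              commOp (A (σ ⟨2 * j.1, by have := j.2; omega⟩))
                     (A (σ ⟨2 * j.1 + 1, by have := j.2; omega⟩))).prod := by
  rw [sum_sign_smul_prod_commOp_pairs_eq_two_pow_smul_nambu, ← Nat.cast_smul_eq_nsmul ℂ,
    smul_smul, one_div, Nat.cast_pow, Nat.cast_ofNat, inv_mul_cancel₀ (pow_ne_zero n two_ne_zero),
    one_smul]
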